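/- arXiv:2602.23081 — 4 statements merged into one kernel-verified Lean document; each statement's English description precedes it below -/
import Mathlib

section
/- Let w > 0 and l > 0 be real constants and let μ₀ be a finite Borel measure on ℝ supported in [0,l]. Let T₀(μ₀) be the finite Borel measure on ℝ² obtained by restricting the product measure μ₀ ⊗ Leb (Leb being Lebesgue measure on ℝ) to the set {(y,t) : 0 ≤ t and y + t·w ≤ l} and pushing it forward under the map (y,t) ↦ (y + t·w, t). Then for every continuously differentiable compactly supported function φ : ℝ² → ℝ, ∫_{ℝ²} ( ∂_tφ(x,t) + w·∂_xφ(x,t) ) dT₀(μ₀)(x,t) = ∫_ℝ ( φ(l, (l − y)/w) − φ(y, 0) ) dμ₀(y). -/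
/-!
Along the characteristic `t ↦ (y + t w, t)` the integrand `∂_tφ + w ∂_xφ` is the derivative
of `t ↦ φ(y + t w, t)`. Undoing the pushforward and applying Fubini, the left side becomes
`∫ (∫₀^θ(y) d/dt φ(y + t w, t) dt) dμ₀(y)`, and the fundamental theorem of calculus evaluates
the inner integral as `φ(l, θ(y)) − φ(y, 0)`, since `θ(y) ≥ 0` for `μ₀`-a.e. `y`.
-/

open MeasureTheory Set

def characteristicFlow (w : ℝ) : ℝ × ℝ ≃ₜ ℝ × ℝ where
  toFun p := (p.1 + p.2 * w, p.2)
  invFun p := (p.1 - p.2 * w, p.2)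
  left_inv p := by simp
  right_inv p := by simp
  continuous_toFun := by fun_prop
  continuous_invFun := by fun_prop

section LineIntegral

variable {E F : Type*} [NormedAddCommGroup E] [NormedSpace ℝ E]
  [NormedAddCommGroup F] [NormedSpace ℝ F] {φ : E → F}

theorem hasDerivAt_comp_add_smul {p v : E} {t : ℝ}
    (hφ : DifferentiableAt ℝ φ (p + t • v)) :
    HasDerivAt (fun s : ℝ => φ (p + s • v)) (fderiv ℝ φ (p + t • v) v) t := by
  have hline : HasDerivAt (fun s : ℝ => p + s • v) v t := by
    simpa using ((hasDerivAt_id t).smul_const v).const_add p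
  exact hφ.hasFDerivAt.comp_hasDerivAt t hline

theorem intervalIntegral_fderiv_apply_add_smul [CompleteSpace F] (hφ : ContDiff ℝ 1 φ)
    (p v : E) (a b : ℝ) :
    ∫ t in a..b, fderiv ℝ φ (p + t • v) v = φ (p + b • v) - φ (p + a • v) := by
  refine intervalIntegral.integral_eq_sub_of_hasDerivAt
    (fun t _ => hasDerivAt_comp_add_smul (hφ.differentiable one_ne_zero _)) ?_
  have hcont : Continuous (fun t : ℝ => fderiv ℝ φ (p + t • v) v) :=
    ((hφ.continuous_fderiv one_ne_zero).comp (by fun_prop)).clm_apply continuous_const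
  exact hcont.intervalIntegrable a b

end LineIntegral

theorem integral_map_restrict_prod_eq_integral_slice {E : Type*} [NormedAddCommGroup E]
    [NormedSpace ℝ E] (μ ν : Measure ℝ) [IsFiniteMeasureOnCompacts μ] [SFinite μ]
    [IsFiniteMeasureOnCompacts ν] [SFinite ν] (G : ℝ × ℝ ≃ₜ ℝ × ℝ) {S : Set (ℝ × ℝ)}
    (hS : MeasurableSet S) {g : ℝ × ℝ → E} (hg : Continuous g) (hgc : HasCompactSupport g) :
    ∫ p, g p ∂(Measure.map G ((μ.prod ν).restrict S))
      = ∫ y, ∫ t in Prod.mk y ⁻¹' S, g (G (y, t)) ∂ν ∂μ := by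
  have hint : Integrable (fun p => g (G p)) (μ.prod ν) :=
    (hg.comp G.continuous).integrable_of_hasCompactSupport (hgc.comp_homeomorph G)
  rw [integral_map G.continuous.aemeasurable hg.aestronglyMeasurable,
    ← integral_indicator hS, integral_prod _ (hint.indicator hS)]
  congr with y
  rw [← integral_indicator (measurable_prodMk_left hS)]
  rfl

theorem mk_preimage_characteristicRegion_eq_Icc {w : ℝ} (hw : 0 < w) (l y : ℝ) :
    Prod.mk y ⁻¹' {p : ℝ × ℝ | 0 ≤ p.2 ∧ p.1 + p.2 * w ≤ l} = Icc 0 ((l - y) / w) := by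
  ext t
  simp only [mem_preimage, mem_ofPred_eq, mem_Icc, le_div_iff₀ hw]
  constructor <;> rintro ⟨h0, h1⟩ <;> exact ⟨h0, by linarith⟩

theorem ContinuousLinearMap.map_prodMk_eq_mul_add_mul (L : ℝ × ℝ →L[ℝ] ℝ) (a b : ℝ) :
    L (a, b) = a * L (1, 0) + b * L (0, 1) := by
  rw [← smul_eq_mul, ← smul_eq_mul, ← L.map_smul, ← L.map_smul, ← L.map_add]
  simp

theorem transport_initial_datum_general (w l : ℝ) (hw : 0 < w)
    (μ₀ : Measure ℝ) [IsFiniteMeasure μ₀]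
    (hsupp : μ₀ ((Set.Icc (0 : ℝ) l)ᶜ) = 0) :
    ∀ φ : ℝ × ℝ → ℝ, ContDiff ℝ 1 φ → HasCompactSupport φ →
      ∫ p, (fderiv ℝ φ p (0, 1) + w * fderiv ℝ φ p (1, 0))
          ∂(Measure.map (fun p : ℝ × ℝ => (p.1 + p.2 * w, p.2))
              ((μ₀.prod volume).restrict
                {p : ℝ × ℝ | 0 ≤ p.2 ∧ p.1 + p.2 * w ≤ l}))
        = ∫ y, (φ (l, (l - y) / w) - φ (y, 0)) ∂μ₀ := by
  intro φ hφ hφc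
  have hS : MeasurableSet {p : ℝ × ℝ | 0 ≤ p.2 ∧ p.1 + p.2 * w ≤ l} :=
    (measurableSet_le measurable_const measurable_snd).inter
      (measurableSet_le (measurable_fst.add (measurable_snd.mul_const w)) measurable_const)
  have hDφ : Continuous (fun p => fderiv ℝ φ p (w, 1)) :=
    (hφ.continuous_fderiv one_ne_zero).clm_apply continuous_const
  have hDφc : HasCompactSupport (fun p => fderiv ℝ φ p (w, 1)) :=
    (hφc.fderiv ℝ).comp_left (g := fun L : ℝ × ℝ →L[ℝ] ℝ => L (w, 1)) rfl
  have hintegrand : (fun p => fderiv ℝ φ p (0, 1) + w * fderiv ℝ φ p (1, 0))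
      = fun p => fderiv ℝ φ p (w, 1) := by
    ext p
    rw [ContinuousLinearMap.map_prodMk_eq_mul_add_mul (fderiv ℝ φ p) w 1]
    ring
  have hle : ∀ᵐ y ∂μ₀, y ≤ l := by
    filter_upwards [ae_iff.mpr hsupp] with y hy using hy.2
  rw [hintegrand, show (fun p : ℝ × ℝ => (p.1 + p.2 * w, p.2)) = characteristicFlow w from rfl,
    integral_map_restrict_prod_eq_integral_slice _ _ _ hS hDφ hDφc]
  refine integral_congr_ae ?_
  filter_upwards [hle] with y hy
  have hline := intervalIntegral_fderiv_apply_add_smul hφ (y, 0) (w, 1) 0 ((l - y) / w)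
  simp only [Prod.smul_mk, Prod.mk_add_mk, smul_eq_mul, zero_add, mul_one, zero_smul, add_zero,
    div_mul_cancel₀ _ hw.ne', add_sub_cancel] at hline
  rw [mk_preimage_characteristicRegion_eq_Icc hw, integral_Icc_eq_integral_Ioc,
    ← intervalIntegral.integral_of_le (div_nonneg (sub_nonneg.mpr hy) hw.le)]
  exact hline

/-- Initial-datum component of the verification in the proof of Theorem 3.2
(Appendix A): the interior transport measure `T₀(μ₀)` from an initial datum
`μ₀` supported in `[0,l]`, paired against `∂_tφ + w ∂_xφ`, produces the
boundary terms `∫ (φ(l, (l−y)/w) − φ(y,0)) dμ₀(y)`. -/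
theorem transport_initial_datum (w l : ℝ) (hw : 0 < w) (hl : 0 < l)
    (μ₀ : Measure ℝ) [IsFiniteMeasure μ₀]
    (hsupp : μ₀ ((Set.Icc (0 : ℝ) l)ᶜ) = 0) :
    ∀ φ : ℝ × ℝ → ℝ, ContDiff ℝ 1 φ → HasCompactSupport φ →
      ∫ p, (fderiv ℝ φ p (0, 1) + w * fderiv ℝ φ p (1, 0))
          ∂(Measure.map (fun p : ℝ × ℝ => (p.1 + p.2 * w, p.2))
              ((μ₀.prod volume).restrict
                {p : ℝ × ℝ | 0 ≤ p.2 ∧ p.1 + p.2 * w ≤ l}))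
        = ∫ y, (φ (l, (l - y) / w) - φ (y, 0)) ∂μ₀ :=
  transport_initial_datum_general w l hw μ₀ hsupp
end

section
/- Let w > 0 and l > 0 be real constants and let μ be a finite Borel measure on ℝ supported in [0,∞). Let T_b(μ) be the finite Borel measure on ℝ² obtained by restricting the product measure μ ⊗ Leb (Leb being Lebesgue measure on ℝ) to the set {(s,t) : s ≤ t ≤ s + l/w} and pushing it forward under the map (s,t) ↦ ((t − s)·w, t). Then for every continuously differentiable compactly supported function φ : ℝ² → ℝ, ∫_{ℝ²} ( ∂_tφ(x,t) + w·∂_xφ(x,t) ) dT_b(μ)(x,t) = ∫_ℝ ( φ(l, s + l/w) − φ(0, s) ) dμ(s). -/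
/-!
The map `(s, t) ↦ ((t - s) w, t)` is a homeomorphism of `ℝ²`, so the integrand pulled back
through it is still compactly supported, and Fubini reduces the left-hand side to `∫ dμ(s)` of
an integral over `t ∈ [s, s + l/w]`. There the integrand `∂_tφ + w ∂_xφ` is the derivative of `φ` along the
characteristic `t ↦ ((t - s) w, t)`, so the inner integral is `φ(l, s + l/w) − φ(0, s)` by the
fundamental theorem of calculus.
-/

open MeasureTheory

theorem ContinuousLinearMap.apply_zero_one_add_mul_apply_one_zero (L : ℝ × ℝ →L[ℝ] ℝ) (w : ℝ) :
    L (0, 1) + w * L (1, 0) = L (w, 1) := by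
  have hv : (w, (1 : ℝ)) = ((0 : ℝ), (1 : ℝ)) + w • ((1 : ℝ), (0 : ℝ)) := by simp
  rw [hv, map_add, map_smul, smul_eq_mul]

theorem integral_fderiv_comp_eq_sub {E : Type*} [NormedAddCommGroup E] [NormedSpace ℝ E]
    {φ : E → ℝ} (hφ : ContDiff ℝ 1 φ) {γ γ' : ℝ → E} (hγ : ∀ t, HasDerivAt γ (γ' t) t)
    (hγ' : Continuous γ') (a b : ℝ) :
    ∫ t in a..b, fderiv ℝ φ (γ t) (γ' t) = φ (γ b) - φ (γ a) := by
  have hγc : Continuous γ := continuous_iff_continuousAt.2 fun t => (hγ t).continuousAt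
  have hderiv : ∀ t, HasDerivAt (φ ∘ γ) (fderiv ℝ φ (γ t) (γ' t)) t := fun t =>
    ((hφ.differentiable one_ne_zero (γ t)).hasFDerivAt).comp_hasDerivAt t (hγ t)
  have hcont : Continuous fun t => fderiv ℝ φ (γ t) (γ' t) :=
    ((hφ.continuous_fderiv one_ne_zero).comp hγc).clm_apply hγ'
  exact intervalIntegral.integral_eq_sub_of_hasDerivAt (fun t _ => hderiv t)
    (hcont.intervalIntegrable a b)

noncomputable def characteristicHomeomorph (w : ℝ) (hw : w ≠ 0) : ℝ × ℝ ≃ₜ ℝ × ℝ where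
  toFun p := ((p.2 - p.1) * w, p.2)
  invFun q := (q.2 - q.1 / w, q.2)
  left_inv p := by ext <;> simp [hw]
  right_inv q := by ext <;> simp [hw]
  continuous_toFun := by fun_prop
  continuous_invFun := by fun_prop

theorem integral_map_restrict_characteristics {μ : Measure ℝ} [IsFiniteMeasureOnCompacts μ]
    [SFinite μ] {w τ : ℝ} (hw : w ≠ 0) (hτ : 0 ≤ τ) {f : ℝ × ℝ → ℝ} (hf : Continuous f)
    (hcs : HasCompactSupport f) :
    ∫ p, f p ∂(Measure.map (fun p : ℝ × ℝ => ((p.2 - p.1) * w, p.2))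
        ((μ.prod volume).restrict {p : ℝ × ℝ | p.1 ≤ p.2 ∧ p.2 ≤ p.1 + τ}))
      = ∫ s, (∫ t in s..s + τ, f ((t - s) * w, t)) ∂μ := by
  set e := characteristicHomeomorph w hw
  have hS : MeasurableSet {p : ℝ × ℝ | p.1 ≤ p.2 ∧ p.2 ≤ p.1 + τ} :=
    (measurableSet_le measurable_fst measurable_snd).inter
      (measurableSet_le measurable_snd (measurable_fst.add_const _))
  have hint : Integrable (fun p : ℝ × ℝ => f ((p.2 - p.1) * w, p.2)) (μ.prod volume) :=
    (hf.comp e.continuous).integrable_of_hasCompactSupport (hcs.comp_homeomorph e)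
  have he : Continuous fun p : ℝ × ℝ => ((p.2 - p.1) * w, p.2) := e.continuous
  rw [integral_map he.aemeasurable hf.aestronglyMeasurable,
    ← integral_indicator hS, integral_prod _ (hint.indicator hS)]
  refine integral_congr_ae (ae_of_all μ fun s => ?_)
  dsimp only
  have hslice : (fun t => {p : ℝ × ℝ | p.1 ≤ p.2 ∧ p.2 ≤ p.1 + τ}.indicator
      (fun p => f ((p.2 - p.1) * w, p.2)) (s, t))
      = (Set.Icc s (s + τ)).indicator fun t => f ((t - s) * w, t) := by
    funext t
    simp only [Set.indicator_apply, Set.mem_ofPred_eq, Set.mem_Icc]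
  rw [hslice, integral_indicator measurableSet_Icc, integral_Icc_eq_integral_Ioc,
    ← intervalIntegral.integral_of_le (by linarith)]

theorem transport_boundary_datum_general (w l : ℝ) (hw : 0 < w) (hl : 0 < l)
    (μ : Measure ℝ) [IsFiniteMeasure μ] :
    ∀ φ : ℝ × ℝ → ℝ, ContDiff ℝ 1 φ → HasCompactSupport φ →
      ∫ p, (fderiv ℝ φ p (0, 1) + w * fderiv ℝ φ p (1, 0))
          ∂(Measure.map (fun p : ℝ × ℝ => ((p.2 - p.1) * w, p.2))
              ((μ.prod volume).restrict
                {p : ℝ × ℝ | p.1 ≤ p.2 ∧ p.2 ≤ p.1 + l / w}))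
        = ∫ s, (φ (l, s + l / w) - φ (0, s)) ∂μ := by
  intro φ hφ hcs
  simp_rw [ContinuousLinearMap.apply_zero_one_add_mul_apply_one_zero]
  rw [integral_map_restrict_characteristics hw.ne' (div_pos hl hw).le
    ((hφ.continuous_fderiv one_ne_zero).clm_apply continuous_const) (hcs.fderiv_apply ℝ (w, 1))]
  refine integral_congr_ae (ae_of_all μ fun s => ?_)
  dsimp only
  have hchar : ∀ t, HasDerivAt (fun t => ((t - s) * w, t)) (w, 1) t := fun t => by
    simpa using (((hasDerivAt_id t).sub_const s).mul_const w).prodMk (hasDerivAt_id t)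
  rw [integral_fderiv_comp_eq_sub hφ hchar continuous_const]
  have hexit : (s + l / w - s) * w = l := by rw [add_sub_cancel_left, div_mul_cancel₀ l hw.ne']
  rw [hexit, sub_self, zero_mul]

/-- Boundary-datum component of the verification in the proof of Theorem 3.2
(Appendix A): the interior transport measure `T_b(μ)` from a boundary datum
`μ` supported in `[0,∞)`, paired against `∂_tφ + w ∂_xφ`, produces the
boundary terms `∫ (φ(l, s + l/w) − φ(0, s)) dμ(s)`. -/
theorem transport_boundary_datum (w l : ℝ) (hw : 0 < w) (hl : 0 < l)
    (μ : Measure ℝ) [IsFiniteMeasure μ]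
    (hsupp : μ ((Set.Ici (0 : ℝ))ᶜ) = 0) :
    ∀ φ : ℝ × ℝ → ℝ, ContDiff ℝ 1 φ → HasCompactSupport φ →
      ∫ p, (fderiv ℝ φ p (0, 1) + w * fderiv ℝ φ p (1, 0))
          ∂(Measure.map (fun p : ℝ × ℝ => ((p.2 - p.1) * w, p.2))
              ((μ.prod volume).restrict
                {p : ℝ × ℝ | p.1 ≤ p.2 ∧ p.2 ≤ p.1 + l / w}))
        = ∫ s, (φ (l, s + l / w) - φ (0, s)) ∂μ :=
  transport_boundary_datum_general w l hw hl μ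
end

section
/- Let w > 0 and l > 0 be real constants. Suppose ν and ν′ are finite Borel measures on ℝ² supported in the strip [0,l] × [0,∞) such that ∫_{ℝ²} ( ∂_tφ(x,t) + w·∂_xφ(x,t) ) dν(x,t) = ∫_{ℝ²} ( ∂_tφ(x,t) + w·∂_xφ(x,t) ) dν′(x,t) for every continuously differentiable compactly supported function φ : ℝ² → ℝ. Then ν = ν′. -/
/-!
The operator `φ ↦ ∂_tφ + w ∂_xφ` hits every compactly supported `C¹` function `ψ` on the strip:
`φ(p) = ∫₀^∞ ψ(p + s (w, 1)) ds` solves `∂_tφ + w ∂_xφ = -ψ`, and since `φ` vanishes for large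
times its restriction to the strip has compact support, so a cutoff turns it into an admissible
test function. Hence `ν` and `ν'` integrate every compactly supported `C¹` function alike, and
such integrals determine a regular measure, because smooth Urysohn functions squeeze between the
indicators of a compact set and of an open neighbourhood of it.
-/

open MeasureTheory Set Filter Topology Function
open scoped Manifold Convolution

section FiniteDimensional

variable {E : Type*} [NormedAddCommGroup E] [NormedSpace ℝ E] [FiniteDimensional ℝ E]

theorem exists_contDiff_hasCompactSupport_one_nhdsSet {K U : Set E} (hK : IsCompact K)
    (hU : IsOpen U) (hKU : K ⊆ U) (n : ℕ∞) :
    ∃ f : E → ℝ, ContDiff ℝ n f ∧ HasCompactSupport f ∧ tsupport f ⊆ U ∧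
      (∀ᶠ x in 𝓝ˢ K, f x = 1) ∧ ∀ x, f x ∈ Icc 0 1 := by
  obtain ⟨V, hV, hKV, hVU, hVc⟩ := exists_open_between_and_isCompact_closure hK hU hKU
  obtain ⟨f, hf1, hf0, hf01⟩ := exists_contMDiffMap_one_nhds_of_subset_interior 𝓘(ℝ, E)
    (n := n) hK.isClosed (hV.interior_eq ▸ hKV)
  have hsupp : tsupport f ⊆ closure V :=
    closure_mono fun x hx => by_contra fun hxV => hx (hf0 x hxV)
  exact ⟨f, contMDiff_iff_contDiff.mp f.contMDiff,
    hVc.of_isClosed_subset (isClosed_tsupport _) hsupp, hsupp.trans hVU, hf1, hf01⟩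

theorem ContDiff.exists_hasCompactSupport_eventuallyEq {F : Type*} [NormedAddCommGroup F]
    [NormedSpace ℝ F] {n : ℕ∞} {φ : E → F} (hφ : ContDiff ℝ n φ) {S : Set E}
    (hS : IsCompact (S ∩ tsupport φ)) :
    ∃ Φ : E → F, ContDiff ℝ n Φ ∧ HasCompactSupport Φ ∧ ∀ p ∈ S, Φ =ᶠ[𝓝 p] φ := by
  obtain ⟨χ, hχ, hχc, -, hχ1, -⟩ :=
    exists_contDiff_hasCompactSupport_one_nhdsSet hS isOpen_univ (subset_univ _) n
  refine ⟨fun x => χ x • φ x, hχ.smul hφ, hχc.smul_right, fun p hp => ?_⟩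
  by_cases hpφ : p ∈ tsupport φ
  · filter_upwards [hχ1.filter_mono (nhds_le_nhdsSet (show p ∈ S ∩ tsupport φ from ⟨hp, hpφ⟩))]
      with x hx
    rw [hx, one_smul]
  · filter_upwards [notMem_tsupport_iff_eventuallyEq.1 hpφ] with x hx
    simp [hx]

variable [MeasurableSpace E] [BorelSpace E] {μ ν : Measure E}

theorem measure_le_of_isCompact_of_integral_contDiff [IsFiniteMeasureOnCompacts μ]
    [ν.OuterRegular] [IsFiniteMeasureOnCompacts ν] {n : ℕ∞}
    (hμν : ∀ f : E → ℝ, ContDiff ℝ n f → HasCompactSupport f → ∫ x, f x ∂μ ≤ ∫ x, f x ∂ν)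
    ⦃K : Set E⦄ (hK : IsCompact K) : μ K ≤ ν K := by
  refine ENNReal.le_of_forall_pos_le_add fun ε hε hν ↦ ?_
  obtain ⟨V, hKV, hV, hVε⟩ : ∃ V ⊇ K, IsOpen V ∧ ν V ≤ ν K + ε :=
    exists_isOpen_le_add K ν (ENNReal.coe_ne_zero.2 hε.ne')
  obtain ⟨f, hf, hfc, hfsV, hf1, hf01⟩ :=
    exists_contDiff_hasCompactSupport_one_nhdsSet hK hV hKV n
  have hνV : ν V ≠ ⊤ := (hVε.trans_lt (by finiteness)).ne
  have hKf : K.indicator 1 ≤ f := fun x => by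
    by_cases hx : x ∈ K
    · simp [hx, hf1.self_of_nhdsSet x hx]
    · simp [hx, (hf01 x).1]
  have hfV : f ≤ V.indicator 1 := fun x => by
    by_cases hx : x ∈ tsupport f
    · simp [hfsV hx, (hf01 x).2]
    · simp [image_eq_zero_of_notMem_tsupport hx, indicator_nonneg]
  have key : μ.real K ≤ ν.real V := calc
    μ.real K = ∫ x, K.indicator 1 x ∂μ := (integral_indicator_one hK.measurableSet).symm
    _ ≤ ∫ x, f x ∂μ := integral_mono
      ((integrableOn_const hK.measure_ne_top).integrable_indicator hK.measurableSet)
      (hf.continuous.integrable_of_hasCompactSupport hfc) hKf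
    _ ≤ ∫ x, f x ∂ν := hμν f hf hfc
    _ ≤ ∫ x, V.indicator 1 x ∂ν := integral_mono
      (hf.continuous.integrable_of_hasCompactSupport hfc)
      ((integrableOn_const hνV).integrable_indicator hV.measurableSet) hfV
    _ = ν.real V := integral_indicator_one hV.measurableSet
  calc μ K ≤ ν V := (ENNReal.toReal_le_toReal hK.measure_ne_top hνV).1 key
    _ ≤ ν K + ε := hVε

theorem MeasureTheory.Measure.ext_of_integral_eq_of_contDiff_hasCompactSupport
    [μ.Regular] [ν.Regular] {n : ℕ∞}
    (hμν : ∀ f : E → ℝ, ContDiff ℝ n f → HasCompactSupport f → ∫ x, f x ∂μ = ∫ x, f x ∂ν) :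
    μ = ν := by
  apply Measure.OuterRegular.ext_isOpen
  apply Measure.InnerRegularWRT.eq_of_innerRegularWRT_of_forall_eq Measure.Regular.innerRegular
    Measure.Regular.innerRegular
  intro K hK
  exact le_antisymm
    (measure_le_of_isCompact_of_integral_contDiff (fun f hf hfc => (hμν f hf hfc).le) hK)
    (measure_le_of_isCompact_of_integral_contDiff (fun f hf hfc => (hμν f hf hfc).ge) hK)

end FiniteDimensional

section RayIntegral

variable {E F : Type*} [NormedAddCommGroup E] [NormedSpace ℝ E] [NormedAddCommGroup F]
  [NormedSpace ℝ F] {v : E} {ψ : E → F}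

noncomputable def rayIntegral (v : E) (ψ : E → F) (p : E) : F :=
  ∫ s in Ioi (0 : ℝ), ψ (p + s • v)

theorem support_rayIntegral_subset :
    support (rayIntegral v ψ) ⊆ {p | ∃ s > (0 : ℝ), p + s • v ∈ support ψ} := by
  intro p hp
  by_contra h
  simp only [mem_ofPred_eq, not_exists, not_and, notMem_support] at h
  exact hp (setIntegral_eq_zero_of_forall_eq_zero h)

omit [NormedSpace ℝ F] in
theorem hasCompactSupport_comp_add_smul (hv : v ≠ 0) (hψ : HasCompactSupport ψ) (p : E) :
    HasCompactSupport fun s : ℝ => ψ (p + s • v) :=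
  hψ.comp_isClosedEmbedding ((Homeomorph.addLeft p).isClosedEmbedding.comp
    (isClosedEmbedding_smul_left hv))

theorem rayIntegral_add_smul (p : E) (h : ℝ) :
    rayIntegral v ψ (p + h • v) = ∫ s in Ioi h, ψ (p + s • v) := by
  have := (measurePreserving_add_right volume h).setIntegral_preimage_emb
    (measurableEmbedding_addRight h) (fun s => ψ (p + s • v)) (Ioi h)
  rw [preimage_add_const_Ioi, sub_self] at this
  simp only [rayIntegral, add_smul, ← add_assoc] at this ⊢
  rw [← this]
  simp only [add_right_comm]

section RayMeasure

variable [MeasurableSpace E] [BorelSpace E]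

/-- The ray points along `-v` because the convolution `(1 ⋆ ψ) p` integrates `ψ (p - q)`. -/
noncomputable def rayMeasure (v : E) : Measure E :=
  (volume.restrict (Ioi (0 : ℝ))).map fun s => s • -v

theorem isFiniteMeasureOnCompacts_rayMeasure (hv : v ≠ 0) :
    IsFiniteMeasureOnCompacts (rayMeasure v) := by
  have hemb := isClosedEmbedding_smul_left (𝕜 := ℝ) (neg_ne_zero.2 hv)
  refine ⟨fun K hK => ?_⟩
  rw [rayMeasure, Measure.map_apply hemb.continuous.measurable hK.measurableSet]
  exact (Measure.restrict_le_self _).trans_lt (hemb.isCompact_preimage hK).measure_lt_top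

theorem rayIntegral_eq_convolution (hv : v ≠ 0) :
    rayIntegral v ψ = (fun _ => (1 : ℝ)) ⋆[ContinuousLinearMap.lsmul ℝ ℝ, rayMeasure v] ψ := by
  ext p
  rw [convolution_def, rayMeasure,
    (isClosedEmbedding_smul_left (neg_ne_zero.2 hv)).measurableEmbedding.integral_map]
  simp [rayIntegral]

end RayMeasure

theorem ContDiff.rayIntegral [FiniteDimensional ℝ E] {n : ℕ∞} (hv : v ≠ 0)
    (hψ : ContDiff ℝ n ψ) (hψc : HasCompactSupport ψ) : ContDiff ℝ n (rayIntegral v ψ) := by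
  borelize E
  have := isFiniteMeasureOnCompacts_rayMeasure hv
  rw [rayIntegral_eq_convolution hv]
  exact hψc.contDiff_convolution_right _ (locallyIntegrable_const 1) hψ

theorem hasDerivAt_rayIntegral_add_smul [CompleteSpace F] (hv : v ≠ 0) (hψ : Continuous ψ)
    (hψc : HasCompactSupport ψ) (p : E) :
    HasDerivAt (fun h : ℝ => rayIntegral v ψ (p + h • v)) (-ψ p) 0 := by
  set g : ℝ → F := fun s => ψ (p + s • v)
  have hg : Continuous g := by fun_prop
  have hgi : Integrable g :=
    hg.integrable_of_hasCompactSupport (hasCompactSupport_comp_add_smul hv hψc p)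
  have heq : (fun h : ℝ => rayIntegral v ψ (p + h • v))
      = fun h => (∫ s in Ioi 0, g s) - ∫ s in (0 : ℝ)..h, g s := by
    ext h
    rw [rayIntegral_add_smul, ← intervalIntegral.integral_Ioi_sub_Ioi' hgi.integrableOn
      hgi.integrableOn, sub_sub_cancel]
  rw [heq]
  simpa [g] using ((hg.integral_hasStrictDerivAt 0 0).hasDerivAt).const_sub (∫ s in Ioi 0, g s)

theorem fderiv_rayIntegral_apply_self [FiniteDimensional ℝ E] [CompleteSpace F] (hv : v ≠ 0)
    (hψ : ContDiff ℝ 1 ψ) (hψc : HasCompactSupport ψ) (p : E) :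
    fderiv ℝ (rayIntegral v ψ) p v = -ψ p := by
  have hline : HasDerivAt (fun h : ℝ => p + h • v) v 0 := by
    simpa using ((hasDerivAt_id (0 : ℝ)).smul_const v).const_add p
  have hφ : HasFDerivAt (rayIntegral v ψ) (fderiv ℝ (rayIntegral v ψ) p) (p + (0 : ℝ) • v) := by
    rw [zero_smul, add_zero]
    exact ((hψ.rayIntegral hv hψc).differentiable one_ne_zero p).hasFDerivAt
  have hcomp := hφ.comp_hasDerivAt 0 hline
  exact hcomp.unique (hasDerivAt_rayIntegral_add_smul hv hψ.continuous hψc p)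

end RayIntegral

theorem isCompact_Icc_prod_Ici_inter_tsupport_rayIntegral {F : Type*} [NormedAddCommGroup F]
    [NormedSpace ℝ F] {v : ℝ × ℝ} {ψ : ℝ × ℝ → F}
    (hv : 0 ≤ v.2) (hψc : HasCompactSupport ψ) (l : ℝ) :
    IsCompact (Icc 0 l ×ˢ Ici 0 ∩ tsupport (rayIntegral v ψ)) := by
  obtain ⟨R, hR⟩ := hψc.isCompact.bddAbove_image continuous_snd.continuousOn
  have hsupp : support (rayIntegral v ψ) ⊆ {q | q.2 ≤ R} := by
    intro q hq
    obtain ⟨s, hs, hqs⟩ := support_rayIntegral_subset hq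
    have := hR (mem_image_of_mem Prod.snd (subset_tsupport ψ hqs))
    simp only [Prod.snd_add, Prod.smul_snd, smul_eq_mul] at this
    exact le_trans (le_add_of_nonneg_right (mul_nonneg hs.le hv)) this
  refine IsCompact.of_isClosed_subset (s := Icc 0 l ×ˢ Icc 0 R)
    (isCompact_Icc.prod isCompact_Icc)
    ((isClosed_Icc.prod isClosed_Ici).inter (isClosed_tsupport _)) ?_
  rintro p ⟨⟨hpx, hpt⟩, hpφ⟩
  exact ⟨hpx, hpt, closure_minimal hsupp (isClosed_le continuous_snd continuous_const) hpφ⟩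

theorem weak_solution_unique_general (w l : ℝ)
    (ν ν' : Measure (ℝ × ℝ)) [IsFiniteMeasure ν] [IsFiniteMeasure ν']
    (hν : ν ((Set.Icc (0 : ℝ) l ×ˢ Set.Ici (0 : ℝ))ᶜ) = 0)
    (hν' : ν' ((Set.Icc (0 : ℝ) l ×ˢ Set.Ici (0 : ℝ))ᶜ) = 0)
    (h : ∀ φ : ℝ × ℝ → ℝ, ContDiff ℝ 1 φ → HasCompactSupport φ →
      ∫ p, (fderiv ℝ φ p (0, 1) + w * fderiv ℝ φ p (1, 0)) ∂ν
        = ∫ p, (fderiv ℝ φ p (0, 1) + w * fderiv ℝ φ p (1, 0)) ∂ν') :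
    ν = ν' := by
  refine Measure.ext_of_integral_eq_of_contDiff_hasCompactSupport (n := 1) fun ψ hψ hψc => ?_
  have hv : ((w, 1) : ℝ × ℝ) ≠ 0 := fun h0 => one_ne_zero (congrArg Prod.snd h0)
  obtain ⟨Φ, hΦ, hΦc, hΦφ⟩ := (hψ.rayIntegral hv hψc).exists_hasCompactSupport_eventuallyEq
    (isCompact_Icc_prod_Ici_inter_tsupport_rayIntegral zero_le_one hψc l)
  have htransport : ∀ p ∈ Icc 0 l ×ˢ Ici 0,
      fderiv ℝ Φ p (0, 1) + w * fderiv ℝ Φ p (1, 0) = -ψ p := by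
    intro p hp
    rw [(hΦφ p hp).fderiv_eq, ← fderiv_rayIntegral_apply_self hv hψ hψc p, ← smul_eq_mul,
      ← map_smul, ← map_add]
    simp
  have hpair : ∀ μ : Measure (ℝ × ℝ), μ (Icc 0 l ×ˢ Ici 0)ᶜ = 0 →
      ∫ p, (fderiv ℝ Φ p (0, 1) + w * fderiv ℝ Φ p (1, 0)) ∂μ = -∫ p, ψ p ∂μ := fun μ hμ =>
    (integral_congr_ae (eventually_of_mem (mem_ae_iff.2 hμ) htransport)).trans (integral_neg _)
  exact neg_injective ((hpair ν hν).symm.trans ((h Φ hΦ hΦc).trans (hpair ν' hν')))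

/-- Uniqueness part of Theorem 3.2: two finite Borel measures supported in the
strip `[0,l] × [0,∞)` that pair identically against `∂_tφ + w ∂_xφ` for all
compactly supported `C¹` test functions `φ` coincide. -/
theorem weak_solution_unique (w l : ℝ) (hw : 0 < w) (hl : 0 < l)
    (ν ν' : Measure (ℝ × ℝ)) [IsFiniteMeasure ν] [IsFiniteMeasure ν']
    (hν : ν ((Set.Icc (0 : ℝ) l ×ˢ Set.Ici (0 : ℝ))ᶜ) = 0)
    (hν' : ν' ((Set.Icc (0 : ℝ) l ×ˢ Set.Ici (0 : ℝ))ᶜ) = 0)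
    (h : ∀ φ : ℝ × ℝ → ℝ, ContDiff ℝ 1 φ → HasCompactSupport φ →
      ∫ p, (fderiv ℝ φ p (0, 1) + w * fderiv ℝ φ p (1, 0)) ∂ν
        = ∫ p, (fderiv ℝ φ p (0, 1) + w * fderiv ℝ φ p (1, 0)) ∂ν') :
    ν = ν' :=
  weak_solution_unique_general w l ν ν' hν hν' h
end

section
/- Let w > 0 and l > 0 be real constants, θ(y) = (l − y)/w, σ(s) = s + l/w. Let μ₀ be a finite Borel measure on ℝ supported in [0,l], μ_in and μ_b finite Borel measures on ℝ supported in [0,∞), and μ_a a finite Borel measure on ℝ supported in [0,∞) with μ_a ≤ θ#μ₀ + σ#(μ_in + μ_b). Then ν := T₀(μ₀) + T_b(μ_in) + T_b(μ_b) is the unique finite Borel measure on ℝ², supported in [0,l] × [0,∞), such that for every continuously differentiable compactly supported function φ : ℝ² → ℝ, ∫_{ℝ²}(∂_tφ + w·∂_xφ)dν + ∫_ℝ φ(y,0)dμ₀(y) + ∫_ℝ φ(0,s)d(μ_in + μ_b)(s) − ∫_ℝ φ(l,s)d(θ#μ₀ + σ#(μ_in + μ_b) − μ_a)(s) − ∫_ℝ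 φ(l,s)dμ_a(s) = 0. -/
/-!
Integrating `∂ₜφ + w ∂ₓφ` along a characteristic `x = a + t w` is the fundamental theorem of
calculus, so against mass transported along characteristics it returns the values of `φ` where
the characteristics leave and enter the edge: the initial datum at `t = 0`, the inflow at `x = 0`,
and at `x = l` the outflow `θ#μ₀ + σ#(μin + μb)`, which is split as `(outflow - μa) + μa`.

For uniqueness, the difference of two solutions annihilates every `∂ₜφ + w ∂ₓφ`. For
`φ(x, t) = g(x - t w) m(t)` with `m' = k` on `t ≥ 0` this derivative is `g(x - t w) k(t)`, so after
the shear `(x, t) ↦ (x - t w, t)` both measures give the same integral to every product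
`g(u) k(t)` of compactly supported `C¹` functions. Products of plateau functions converge
boundedly to indicators of closed rectangles, and these determine a finite measure on `ℝ²`.
-/

open MeasureTheory

/-- The interior transport measure from an initial datum `μ₀` supported in `[0,l]`:
the pushforward under `(y,t) ↦ (y + t·w, t)` of the restriction of `μ₀ ⊗ Leb`
to `{(y,t) : 0 ≤ t ≤ (l − y)/w}`. -/
noncomputable def T0 (w l : ℝ) (μ₀ : MeasureTheory.Measure ℝ) :
    MeasureTheory.Measure (ℝ × ℝ) :=
  Measure.map (fun p : ℝ × ℝ => (p.1 + p.2 * w, p.2))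
    ((μ₀.prod volume).restrict {p : ℝ × ℝ | 0 ≤ p.2 ∧ p.2 ≤ (l - p.1) / w})

/-- The interior transport measure from a boundary datum `μ` supported in `[0,∞)`:
the pushforward under `(s,t) ↦ ((t − s)·w, t)` of the restriction of `μ ⊗ Leb`
to `{(s,t) : s ≤ t ≤ s + l/w}`. -/
noncomputable def Tb (w l : ℝ) (μ : MeasureTheory.Measure ℝ) :
    MeasureTheory.Measure (ℝ × ℝ) :=
  Measure.map (fun p : ℝ × ℝ => ((p.2 - p.1) * w, p.2))
    ((μ.prod volume).restrict {p : ℝ × ℝ | p.1 ≤ p.2 ∧ p.2 ≤ p.1 + l / w})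

open Set Filter Topology

noncomputable def plateau (a b ε x : ℝ) : ℝ :=
  Real.smoothTransition ((x - a + ε) / ε) * Real.smoothTransition ((b + ε - x) / ε)

lemma contDiff_plateau (a b ε : ℝ) : ContDiff ℝ 1 (plateau a b ε) :=
  (Real.smoothTransition.contDiff.comp (by fun_prop)).mul
    (Real.smoothTransition.contDiff.comp (by fun_prop))

section Plateau

variable {a b ε x : ℝ}

lemma plateau_mem_Icc : plateau a b ε x ∈ Icc 0 1 :=
  ⟨mul_nonneg (Real.smoothTransition.nonneg _) (Real.smoothTransition.nonneg _),
    mul_le_one₀ (Real.smoothTransition.le_one _) (Real.smoothTransition.nonneg _)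
      (Real.smoothTransition.le_one _)⟩

lemma plateau_eq_one (hε : 0 < ε) (hx : x ∈ Icc a b) : plateau a b ε x = 1 := by
  have h₁ : 1 ≤ (x - a + ε) / ε := by rw [le_div_iff₀ hε]; linarith [hx.1]
  have h₂ : 1 ≤ (b + ε - x) / ε := by rw [le_div_iff₀ hε]; linarith [hx.2]
  simp [plateau, Real.smoothTransition.one_of_one_le h₁,
    Real.smoothTransition.one_of_one_le h₂]

lemma plateau_eq_zero (hε : 0 < ε) (hx : x ≤ a - ε ∨ b + ε ≤ x) : plateau a b ε x = 0 := by
  rcases hx with hx | hx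
  · have : (x - a + ε) / ε ≤ 0 := div_nonpos_of_nonpos_of_nonneg (by linarith) hε.le
    simp [plateau, Real.smoothTransition.zero_of_nonpos this]
  · have : (b + ε - x) / ε ≤ 0 := div_nonpos_of_nonpos_of_nonneg (by linarith) hε.le
    simp [plateau, Real.smoothTransition.zero_of_nonpos this]

lemma hasCompactSupport_plateau (hε : 0 < ε) : HasCompactSupport (plateau a b ε) :=
  HasCompactSupport.intro (isCompact_Icc (a := a - ε) (b := b + ε)) fun x hx => by
    rw [mem_Icc, not_and_or, not_le, not_le] at hx
    exact plateau_eq_zero hε (hx.imp le_of_lt le_of_lt)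

end Plateau

lemma tendsto_plateau (a b x : ℝ) :
    Tendsto (fun n : ℕ => plateau a b (1 / (n + 1)) x) atTop (𝓝 ((Icc a b).indicator 1 x)) := by
  by_cases hx : x ∈ Icc a b
  · simp only [indicator_of_mem hx, Pi.one_apply, plateau_eq_one Nat.one_div_pos_of_nat hx]
    exact tendsto_const_nhds
  · rw [indicator_of_notMem hx]
    obtain ⟨δ, hδ, hxδ⟩ : ∃ δ > 0, x ≤ a - δ ∨ b + δ ≤ x := by
      rw [mem_Icc, not_and_or, not_le, not_le] at hx
      rcases hx with hx | hx
      exacts [⟨a - x, by linarith, by left; linarith⟩, ⟨x - b, by linarith, by right; linarith⟩]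
    refine tendsto_const_nhds.congr' ?_
    filter_upwards [tendsto_one_div_add_atTop_nhds_zero_nat.eventually (gt_mem_nhds hδ)]
      with n hn
    exact (plateau_eq_zero Nat.one_div_pos_of_nat
      (hxδ.imp (fun _ => by linarith) (fun _ => by linarith))).symm

lemma ext_of_Icc_prod_Icc {ρ₁ ρ₂ : Measure (ℝ × ℝ)} [IsLocallyFiniteMeasure ρ₁]
    (h : ∀ a b c d : ℝ, a ≤ b → c ≤ d →
      ρ₁ (Icc a b ×ˢ Icc c d) = ρ₂ (Icc a b ×ˢ Icc c d)) :
    ρ₁ = ρ₂ := by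
  set I : Set (Set ℝ) := {S | ∃ l u : ℝ, l ≤ u ∧ Icc l u = S}
  have hI : MeasurableSpace.generateFrom I = (inferInstance : MeasurableSpace ℝ) :=
    (borel_eq_generateFrom_Icc ℝ).symm.trans BorelSpace.measurable_eq.symm
  have hcover : ⋃ n : ℕ, Icc (-n : ℝ) n = univ :=
    eq_univ_of_forall fun x => mem_iUnion.2 <|
      (exists_nat_ge |x|).imp fun n hn => abs_le.1 hn
  have hIspan : IsCountablySpanning I :=
    ⟨fun n => Icc (-n : ℝ) n, fun n => ⟨_, _, by simp, rfl⟩, hcover⟩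
  refine Measure.ext_of_generateFrom_of_iUnion (image2 (· ×ˢ ·) I I)
    (fun n => Icc (-n : ℝ) n ×ˢ Icc (-n : ℝ) n)
    (generateFrom_eq_prod hI hI hIspan hIspan).symm
    ((isPiSystem_Icc id id).prod (isPiSystem_Icc id id)) ?_ ?_
    (fun n => (isCompact_Icc.prod isCompact_Icc).measure_lt_top.ne) ?_
  · rw [iUnion_prod_of_monotone (fun m n hmn => Icc_subset_Icc (by simpa) (by simpa))
      (fun m n hmn => Icc_subset_Icc (by simpa) (by simpa)), hcover, univ_prod_univ]
  · exact fun n => ⟨_, ⟨_, _, by simp, rfl⟩, _, ⟨_, _, by simp, rfl⟩, rfl⟩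
  · rintro _ ⟨_, ⟨a, b, hab, rfl⟩, _, ⟨c, d, hcd, rfl⟩, rfl⟩
    exact h a b c d hab hcd

lemma tendsto_integral_plateau_mul_plateau (ρ : Measure (ℝ × ℝ)) [IsFiniteMeasure ρ]
    (a b c d : ℝ) :
    Tendsto
      (fun n : ℕ => ∫ p, plateau a b (1 / (n + 1)) p.1 * plateau c d (1 / (n + 1)) p.2 ∂ρ)
      atTop (𝓝 (ρ.real (Icc a b ×ˢ Icc c d))) := by
  rw [← integral_indicator_one (measurableSet_Icc.prod measurableSet_Icc)]
  refine tendsto_integral_of_dominated_convergence (fun _ => 1)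
    (fun n => (((contDiff_plateau a b _).continuous.comp continuous_fst).mul
      ((contDiff_plateau c d _).continuous.comp continuous_snd)).aestronglyMeasurable)
    (integrable_const 1) (fun n => ae_of_all _ fun p => ?_) (ae_of_all _ fun p => ?_)
  · rw [norm_mul]
    exact mul_le_one₀ (by simpa [abs_of_nonneg plateau_mem_Icc.1] using plateau_mem_Icc.2)
      (norm_nonneg _) (by simpa [abs_of_nonneg plateau_mem_Icc.1] using plateau_mem_Icc.2)
  · rw [← Prod.mk.eta (p := p), indicator_prod_one]
    exact (tendsto_plateau a b p.1).mul (tendsto_plateau c d p.2)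

theorem ext_of_integral_mul_contDiff {ρ₁ ρ₂ : Measure (ℝ × ℝ)} [IsFiniteMeasure ρ₁]
    [IsFiniteMeasure ρ₂]
    (h : ∀ g k : ℝ → ℝ, ContDiff ℝ 1 g → HasCompactSupport g → ContDiff ℝ 1 k →
      HasCompactSupport k → ∫ p, g p.1 * k p.2 ∂ρ₁ = ∫ p, g p.1 * k p.2 ∂ρ₂) :
    ρ₁ = ρ₂ := by
  refine ext_of_Icc_prod_Icc fun a b c d _ _ => (measureReal_eq_measureReal_iff).1 ?_
  refine tendsto_nhds_unique (tendsto_integral_plateau_mul_plateau ρ₁ a b c d) ?_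
  refine (tendsto_integral_plateau_mul_plateau ρ₂ a b c d).congr fun n =>
    (h _ _ ?_ ?_ ?_ ?_).symm
  exacts [contDiff_plateau _ _ _, hasCompactSupport_plateau Nat.one_div_pos_of_nat,
    contDiff_plateau _ _ _, hasCompactSupport_plateau Nat.one_div_pos_of_nat]

/-- `∂ₜφ + w ∂ₓφ`, points of the plane being `(x, t)`. -/
noncomputable def transportDeriv (w : ℝ) (φ : ℝ × ℝ → ℝ) (p : ℝ × ℝ) : ℝ :=
  fderiv ℝ φ p (0, 1) + w * fderiv ℝ φ p (1, 0)

section TransportDeriv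

variable {w : ℝ} {φ : ℝ × ℝ → ℝ}

lemma ContDiff.continuous_transportDeriv (hφ : ContDiff ℝ 1 φ) :
    Continuous (transportDeriv w φ) := by
  have h := hφ.continuous_fderiv one_ne_zero
  exact (h.clm_apply continuous_const).add (continuous_const.mul (h.clm_apply continuous_const))

lemma HasCompactSupport.transportDeriv (hφ : HasCompactSupport φ) :
    HasCompactSupport (transportDeriv w φ) :=
  (hφ.fderiv_apply ℝ _).add ((hφ.fderiv_apply ℝ _).mul_left)

lemma hasDerivAt_comp_characteristic (hφ : Differentiable ℝ φ) (a t : ℝ) :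
    HasDerivAt (fun t => φ (a + t * w, t)) (transportDeriv w φ (a + t * w, t)) t := by
  have hline : HasDerivAt (fun t : ℝ => (a + t * w, t)) (w, 1) t := by
    simpa using (((hasDerivAt_id t).mul_const w).const_add a).prodMk (hasDerivAt_id t)
  refine ((hφ _).hasFDerivAt.comp_hasDerivAt t hline).congr_deriv ?_
  have : ((w, 1) : ℝ × ℝ) = (0, 1) + w • (1, 0) := by simp
  rw [this, map_add, map_smul, smul_eq_mul]
  rfl

end TransportDeriv

lemma Continuous.integrable_comp_of_hasCompactSupport {X E : Type*} [MeasurableSpace X]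
    [TopologicalSpace E] [MeasurableSpace E] [OpensMeasurableSpace E] {μ : Measure X}
    [IsFiniteMeasure μ] {ψ : E → ℝ} (hψ : Continuous ψ) (hψc : HasCompactSupport ψ)
    {f : X → E} (hf : Measurable f) : Integrable (fun x => ψ (f x)) μ := by
  obtain ⟨C, hC⟩ := hψc.exists_bound_of_continuous hψ
  exact .of_bound (hψ.measurable.comp hf).aestronglyMeasurable C (ae_of_all _ fun x => hC _)

/-- The mass of `μ` at `y` travels along the characteristic `x = a y + t w` during the
time interval `[α y, β y]`. -/
noncomputable def transportMeasure (w : ℝ) (a α β : ℝ → ℝ) (μ : Measure ℝ) :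
    Measure (ℝ × ℝ) :=
  Measure.map (fun p : ℝ × ℝ => (a p.1 + p.2 * w, p.2))
    ((μ.prod volume).restrict {p : ℝ × ℝ | α p.1 ≤ p.2 ∧ p.2 ≤ β p.1})

section TransportMeasure

variable {w : ℝ} {a α β : ℝ → ℝ} {μ : Measure ℝ} {φ : ℝ × ℝ → ℝ}

lemma measurableSet_between (hα : Measurable α) (hβ : Measurable β) :
    MeasurableSet {p : ℝ × ℝ | α p.1 ≤ p.2 ∧ p.2 ≤ β p.1} :=
  (measurableSet_le (hα.comp measurable_fst) measurable_snd).inter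
    (measurableSet_le measurable_snd (hβ.comp measurable_fst))

lemma isFiniteMeasure_restrict_between [IsFiniteMeasure μ] (hα : Measurable α)
    (hβ : Measurable β) {L : ℝ} (hL : ∀ᵐ y ∂μ, β y - α y ≤ L) :
    IsFiniteMeasure ((μ.prod volume).restrict {p : ℝ × ℝ | α p.1 ≤ p.2 ∧ p.2 ≤ β p.1}) := by
  rw [isFiniteMeasure_restrict, Measure.prod_apply (measurableSet_between hα hβ)]
  refine (lt_of_le_of_lt (lintegral_mono_ae (g := fun _ => ENNReal.ofReal L) ?_) ?_).ne
  · filter_upwards [hL] with y hy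
    change volume (Icc (α y) (β y)) ≤ _
    rw [Real.volume_Icc]
    exact ENNReal.ofReal_le_ofReal hy
  · simp [lintegral_const, ENNReal.mul_lt_top]

lemma isFiniteMeasure_transportMeasure [IsFiniteMeasure μ] (hα : Measurable α)
    (hβ : Measurable β) {L : ℝ} (hL : ∀ᵐ y ∂μ, β y - α y ≤ L) :
    IsFiniteMeasure (transportMeasure w a α β μ) :=
  have := isFiniteMeasure_restrict_between hα hβ hL
  Measure.isFiniteMeasure_map _ _

lemma transportMeasure_compl_eq_zero (ha : Measurable a) {K : Set (ℝ × ℝ)}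
    (hK : MeasurableSet K) (h : ∀ᵐ y ∂μ, ∀ t ∈ Icc (α y) (β y), (a y + t * w, t) ∈ K) :
    transportMeasure w a α β μ Kᶜ = 0 := by
  have hmeas : Measurable fun p : ℝ × ℝ => (a p.1 + p.2 * w, p.2) := by fun_prop
  rw [transportMeasure, Measure.map_apply hmeas hK.compl,
    Measure.restrict_apply (hmeas hK.compl)]
  refine measure_mono_null
    (t := {y | ¬ ∀ t ∈ Icc (α y) (β y), (a y + t * w, t) ∈ K} ×ˢ univ) ?_ ?_
  · rintro ⟨y, t⟩ ⟨hK, ht⟩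
    exact ⟨fun hy => hK (hy t ht), trivial⟩
  · rw [Measure.prod_prod, ae_iff.1 h, zero_mul]

lemma integral_transportDeriv_transportMeasure [IsFiniteMeasure μ] (ha : Measurable a)
    (hα : Measurable α) (hβ : Measurable β) (hαβ : ∀ᵐ y ∂μ, α y ≤ β y) {L : ℝ}
    (hL : ∀ᵐ y ∂μ, β y - α y ≤ L) (hφ : ContDiff ℝ 1 φ) (hφc : HasCompactSupport φ) :
    ∫ p, transportDeriv w φ p ∂transportMeasure w a α β μ
      = ∫ y, φ (a y + β y * w, β y) ∂μ - ∫ y, φ (a y + α y * w, α y) ∂μ := by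
  set S := {p : ℝ × ℝ | α p.1 ≤ p.2 ∧ p.2 ≤ β p.1}
  have hS : MeasurableSet S := measurableSet_between hα hβ
  have := isFiniteMeasure_restrict_between hα hβ hL
  have hD := hφ.continuous_transportDeriv (w := w)
  have hint : Integrable (S.indicator fun p => transportDeriv w φ (a p.1 + p.2 * w, p.2))
      (μ.prod volume) :=
    (integrable_indicator_iff hS).2 <|
      hD.integrable_comp_of_hasCompactSupport hφc.transportDeriv (by fun_prop)
  have hfiber : ∀ᵐ y ∂μ,
      ∫ t, S.indicator (fun p => transportDeriv w φ (a p.1 + p.2 * w, p.2)) (y, t)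
        = φ (a y + β y * w, β y) - φ (a y + α y * w, α y) := by
    filter_upwards [hαβ] with y hy
    change ∫ t, (Icc (α y) (β y)).indicator (fun t => transportDeriv w φ (a y + t * w, t)) t
      = _
    rw [integral_indicator measurableSet_Icc, integral_Icc_eq_integral_Ioc,
      ← intervalIntegral.integral_of_le hy]
    exact intervalIntegral.integral_eq_sub_of_hasDerivAt
      (fun t _ => hasDerivAt_comp_characteristic (hφ.differentiable one_ne_zero) _ t)
      ((hD.comp (by fun_prop)).intervalIntegrable _ _)
  rw [transportMeasure, integral_map (by fun_prop) hD.aestronglyMeasurable,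
    ← integral_indicator hS, integral_prod _ hint, integral_congr_ae hfiber,
    integral_sub (hφ.continuous.integrable_comp_of_hasCompactSupport hφc (by fun_prop))
      (hφ.continuous.integrable_comp_of_hasCompactSupport hφc (by fun_prop))]

end TransportMeasure

section Tram

variable {w l : ℝ} {μ μ' μ₀ : Measure ℝ}

lemma T0_eq_transportMeasure :
    T0 w l μ₀ = transportMeasure w id 0 (fun y => (l - y) / w) μ₀ :=
  rfl

lemma Tb_eq_transportMeasure :
    Tb w l μ = transportMeasure w (fun s => -(s * w)) id (· + l / w) μ := by
  rw [Tb, transportMeasure]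
  congr 1
  funext p
  congr 1
  ring

lemma Tb_add [SFinite μ] [SFinite μ'] :
    Tb w l (μ + μ') = Tb w l μ + Tb w l μ' := by
  simp only [Tb, Measure.add_prod, Measure.restrict_add]
  exact Measure.map_add _ _ (by fun_prop)

lemma isFiniteMeasure_T0 [IsFiniteMeasure μ₀] (hw : 0 ≤ w) (hμ₀ : μ₀ (Icc 0 l)ᶜ = 0) :
    IsFiniteMeasure (T0 w l μ₀) := by
  rw [T0_eq_transportMeasure]
  refine isFiniteMeasure_transportMeasure measurable_zero (by fun_prop) (L := l / w) ?_
  filter_upwards [mem_ae_iff.2 hμ₀] with y hy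
  simpa using div_le_div_of_nonneg_right (by linarith [hy.1]) hw

instance isFiniteMeasure_Tb [IsFiniteMeasure μ] : IsFiniteMeasure (Tb w l μ) := by
  rw [Tb_eq_transportMeasure]
  exact isFiniteMeasure_transportMeasure measurable_id (by fun_prop) (L := l / w)
    (ae_of_all _ fun s => by simp)

lemma T0_compl_eq_zero (hw : 0 < w) (hμ₀ : μ₀ (Icc 0 l)ᶜ = 0) :
    T0 w l μ₀ (Icc 0 l ×ˢ Ici 0)ᶜ = 0 := by
  rw [T0_eq_transportMeasure]
  refine transportMeasure_compl_eq_zero measurable_id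
    (measurableSet_Icc.prod measurableSet_Ici) ?_
  filter_upwards [mem_ae_iff.2 hμ₀] with y hy t ht
  simp only [Pi.zero_apply, mem_Icc] at ht
  have : t * w ≤ l - y := (le_div_iff₀ hw).1 ht.2
  refine ⟨⟨?_, ?_⟩, ht.1⟩ <;> simp only [id] <;> nlinarith [hy.1, mul_nonneg ht.1 hw.le]

lemma Tb_compl_eq_zero (hw : 0 < w) (hμ : μ (Ici 0)ᶜ = 0) :
    Tb w l μ (Icc 0 l ×ˢ Ici 0)ᶜ = 0 := by
  rw [Tb_eq_transportMeasure]
  refine transportMeasure_compl_eq_zero (by fun_prop)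
    (measurableSet_Icc.prod measurableSet_Ici) ?_
  filter_upwards [mem_ae_iff.2 hμ] with s hs t ht
  simp only [id, mem_Icc] at ht
  have : (t - s) * w ≤ l := (le_div_iff₀ hw).1 (by linarith [ht.2])
  exact ⟨⟨by nlinarith [ht.1], by linarith⟩, le_trans hs ht.1⟩

lemma integral_transportDeriv_T0 [IsFiniteMeasure μ₀] (hw : 0 < w)
    (hμ₀ : μ₀ (Icc 0 l)ᶜ = 0) {φ : ℝ × ℝ → ℝ} (hφ : ContDiff ℝ 1 φ) (hφc : HasCompactSupport φ) :
    ∫ p, transportDeriv w φ p ∂T0 w l μ₀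
      = ∫ s, φ (l, s) ∂μ₀.map (fun y => (l - y) / w) - ∫ y, φ (y, 0) ∂μ₀ := by
  have hy : ∀ᵐ y ∂μ₀, y ∈ Icc 0 l := mem_ae_iff.2 hμ₀
  have := hφ.continuous
  rw [T0_eq_transportMeasure, integral_transportDeriv_transportMeasure measurable_id
    measurable_zero (by fun_prop) (L := l / w) ?_ ?_ hφ hφc,
    integral_map (by fun_prop)
      (by fun_prop : Continuous fun s => φ (l, s)).aestronglyMeasurable]
  · simp [div_mul_cancel₀ _ hw.ne']
  · filter_upwards [hy] with y hy
    exact div_nonneg (by linarith [hy.2]) hw.le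
  · filter_upwards [hy] with y hy
    simpa using div_le_div_of_nonneg_right (by linarith [hy.1]) hw.le

lemma integral_transportDeriv_Tb [IsFiniteMeasure μ] (hw : 0 < w) (hl : 0 ≤ l)
    {φ : ℝ × ℝ → ℝ} (hφ : ContDiff ℝ 1 φ) (hφc : HasCompactSupport φ) :
    ∫ p, transportDeriv w φ p ∂Tb w l μ
      = ∫ s, φ (l, s) ∂μ.map (· + l / w) - ∫ s, φ (0, s) ∂μ := by
  have := hφ.continuous
  rw [Tb_eq_transportMeasure, integral_transportDeriv_transportMeasure (by fun_prop)
    measurable_id (by fun_prop) (L := l / w) ?_ ?_ hφ hφc,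
    integral_map (by fun_prop)
      (by fun_prop : Continuous fun s => φ (l, s)).aestronglyMeasurable]
  · have h₁ : ∀ s, -(s * w) + (s + l / w) * w = l := fun s => by field_simp; ring
    simp only [h₁, id, neg_add_cancel]
  · exact ae_of_all _ fun s => by simpa using div_nonneg hl hw.le
  · exact ae_of_all _ fun s => by simp

end Tram

def shear (w : ℝ) : ℝ × ℝ ≃ₜ ℝ × ℝ where
  toFun p := (p.1 - p.2 * w, p.2)
  invFun p := (p.1 + p.2 * w, p.2)
  left_inv p := by simp
  right_inv p := by simp
  continuous_toFun := by fun_prop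
  continuous_invFun := by fun_prop

@[simp]
lemma shear_apply (w : ℝ) (p : ℝ × ℝ) : shear w p = (p.1 - p.2 * w, p.2) :=
  rfl

lemma exists_hasDerivAt_eq_of_hasCompactSupport {k : ℝ → ℝ} (hk : Continuous k)
    (hkc : HasCompactSupport k) (t₀ : ℝ) :
    ∃ m : ℝ → ℝ, ContDiff ℝ 1 m ∧ HasCompactSupport m ∧ ∀ t, t₀ ≤ t → HasDerivAt m (k t) t := by
  obtain ⟨T, hT⟩ : ∃ T, ∀ u, T ≤ u → k u = 0 := by
    obtain ⟨b, hb⟩ := hkc.isCompact.bddAbove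
    exact ⟨b + 1, fun u hu => image_eq_zero_of_notMem_tsupport fun h => by
      linarith [hb h]⟩
  set H : ℝ → ℝ := fun t => ∫ u in T..t, k u
  have hH : ∀ t, HasDerivAt H (k t) t := fun t => (hk.integral_hasStrictDerivAt T t).hasDerivAt
  have hH_zero : ∀ t, T ≤ t → H t = 0 := fun t ht => by
    rw [← intervalIntegral.integral_zero (a := T) (b := t) (μ := volume)]
    refine intervalIntegral.integral_congr fun u hu => hT u ?_
    rw [uIcc_of_le ht] at hu
    exact hu.1
  set χ : ℝ → ℝ := fun t => Real.smoothTransition (2 * (t - t₀) + 2)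
  have hχ_zero : ∀ t, t ≤ t₀ - 1 → χ t = 0 := fun t ht =>
    Real.smoothTransition.zero_of_nonpos (by linarith)
  have hχ_one : ∀ t, t₀ - 1 / 2 ≤ t → χ t = 1 := fun t ht =>
    Real.smoothTransition.one_of_one_le (by linarith)
  refine ⟨fun t => H t * χ t, ?_, ?_, fun t ht => (hH t).congr_of_eventuallyEq ?_⟩
  · have hH1 : ContDiff ℝ 1 H := contDiff_one_iff_deriv.2
      ⟨fun t => (hH t).differentiableAt, by simpa [funext fun t => (hH t).deriv] using hk⟩
    exact hH1.mul (Real.smoothTransition.contDiff.comp (by fun_prop))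
  · refine HasCompactSupport.intro (isCompact_Icc (a := t₀ - 1) (b := T)) fun t ht => ?_
    rw [mem_Icc, not_and_or, not_le, not_le] at ht
    rcases ht with ht | ht
    · simp [hχ_zero t ht.le]
    · simp [hH_zero t ht.le]
  · filter_upwards [Ioi_mem_nhds (show t₀ - 1 / 2 < t by linarith)] with u hu
    simp [hχ_one u (le_of_lt hu)]

lemma exists_transportDeriv_eq_mul (w t₀ : ℝ) {g k : ℝ → ℝ} (hg : ContDiff ℝ 1 g)
    (hgc : HasCompactSupport g) (hk : Continuous k) (hkc : HasCompactSupport k) :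
    ∃ φ : ℝ × ℝ → ℝ, ContDiff ℝ 1 φ ∧ HasCompactSupport φ ∧
      ∀ p : ℝ × ℝ, t₀ ≤ p.2 → transportDeriv w φ p = g (p.1 - p.2 * w) * k p.2 := by
  obtain ⟨m, hm, hmc, hm'⟩ := exists_hasDerivAt_eq_of_hasCompactSupport hk hkc t₀
  set ψ : ℝ × ℝ → ℝ := fun q => g q.1 * m q.2
  have hψc : HasCompactSupport ψ :=
    HasCompactSupport.intro (hgc.isCompact.prod hmc.isCompact) fun q hq => by
      rcases not_and_or.1 hq with hq | hq
      · simp [ψ, image_eq_zero_of_notMem_tsupport hq]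
      · simp [ψ, image_eq_zero_of_notMem_tsupport hq]
  have hφ : ContDiff ℝ 1 (ψ ∘ shear w) :=
    ((hg.comp contDiff_fst).mul (hm.comp contDiff_snd)).comp
      (show ContDiff ℝ 1 fun p : ℝ × ℝ => (p.1 - p.2 * w, p.2) by fun_prop)
  refine ⟨ψ ∘ shear w, hφ, hψc.comp_homeomorph _, fun ⟨x, t⟩ ht => ?_⟩
  have hchar := hasDerivAt_comp_characteristic (w := w) (hφ.differentiable one_ne_zero)
    (x - t * w) t
  have hline : (fun τ => (ψ ∘ shear w) (x - t * w + τ * w, τ)) = fun τ => g (x - t * w) * m τ := by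
    funext τ
    simp [ψ]
  rw [hline, sub_add_cancel] at hchar
  exact hchar.unique ((hm' t ht).const_mul _)

theorem eq_of_forall_integral_transportDeriv_eq {w : ℝ} {ν₁ ν₂ : Measure (ℝ × ℝ)}
    [IsFiniteMeasure ν₁] [IsFiniteMeasure ν₂] (h₁ : ∀ᵐ p ∂ν₁, 0 ≤ p.2) (h₂ : ∀ᵐ p ∂ν₂, 0 ≤ p.2)
    (h : ∀ φ : ℝ × ℝ → ℝ, ContDiff ℝ 1 φ → HasCompactSupport φ →
      ∫ p, transportDeriv w φ p ∂ν₁ = ∫ p, transportDeriv w φ p ∂ν₂) :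
    ν₁ = ν₂ := by
  let e := (shear w).toMeasurableEquiv
  refine e.map_measurableEquiv_injective <|
    ext_of_integral_mul_contDiff fun g k hg hgc hk hkc => ?_
  obtain ⟨φ, hφ, hφc, hDφ⟩ := exists_transportDeriv_eq_mul w 0 hg hgc hk.continuous hkc
  have hsheared : ∀ ν : Measure (ℝ × ℝ), (∀ᵐ p ∂ν, 0 ≤ p.2) →
      ∫ q, g q.1 * k q.2 ∂ν.map e = ∫ p, transportDeriv w φ p ∂ν := fun ν hν => by
    rw [integral_map_equiv]
    exact integral_congr_ae (hν.mono fun p hp => (hDφ p hp).symm)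
  rw [hsheared ν₁ h₁, hsheared ν₂ h₂, h φ hφ hφc]

/-- Definition 3.4 of the paper: a weak measure-valued solution of
`ν_t + (w ν)_x = b ε₀ - a ε_l` on `[0, l]`, with `b = μin + μb` and `a = μa`. -/
def IsWeakSolution (w l : ℝ) (μ₀ μin μb μa : Measure ℝ) (ν : Measure (ℝ × ℝ)) : Prop :=
  IsFiniteMeasure ν ∧ ν (Icc 0 l ×ˢ Ici 0)ᶜ = 0 ∧
    ∀ φ : ℝ × ℝ → ℝ, ContDiff ℝ 1 φ → HasCompactSupport φ →
      ∫ p, transportDeriv w φ p ∂ν + ∫ y, φ (y, 0) ∂μ₀ + ∫ s, φ (0, s) ∂(μin + μb)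
        - ∫ s, φ (l, s)
            ∂((μ₀.map (fun y => (l - y) / w) + (μin + μb).map (fun s => s + l / w)) - μa)
        - ∫ s, φ (l, s) ∂μa = 0

section WeakSolution

variable {w l : ℝ} {μ₀ μin μb μa : Measure ℝ}

theorem IsWeakSolution.unique {ν₁ ν₂ : Measure (ℝ × ℝ)}
    (h₁ : IsWeakSolution w l μ₀ μin μb μa ν₁) (h₂ : IsWeakSolution w l μ₀ μin μb μa ν₂) :
    ν₁ = ν₂ := by
  obtain ⟨_, hsupp₁, hweak₁⟩ := h₁
  obtain ⟨_, hsupp₂, hweak₂⟩ := h₂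
  have time_nonneg : ∀ ν : Measure (ℝ × ℝ), ν (Icc 0 l ×ˢ Ici 0)ᶜ = 0 → ∀ᵐ p ∂ν, 0 ≤ p.2 :=
    fun ν hν => ae_iff.2 <| measure_mono_null
      (fun p (hp : ¬ 0 ≤ p.2) (hmem : p ∈ Icc 0 l ×ˢ Ici 0) => hp hmem.2) hν
  refine eq_of_forall_integral_transportDeriv_eq (w := w) (time_nonneg ν₁ hsupp₁)
    (time_nonneg ν₂ hsupp₂) fun φ hφ hφc => ?_
  linarith [hweak₁ φ hφ hφc, hweak₂ φ hφ hφc]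

theorem isWeakSolution_T0_add_Tb [IsFiniteMeasure μ₀] [IsFiniteMeasure μin]
    [IsFiniteMeasure μb] [IsFiniteMeasure μa] (hw : 0 < w) (hl : 0 ≤ l)
    (hμ₀ : μ₀ (Icc 0 l)ᶜ = 0) (hμin : μin (Ici 0)ᶜ = 0) (hμb : μb (Ici 0)ᶜ = 0)
    (hμa : μa ≤ μ₀.map (fun y => (l - y) / w) + (μin + μb).map (fun s => s + l / w)) :
    IsWeakSolution w l μ₀ μin μb μa (T0 w l μ₀ + Tb w l μin + Tb w l μb) := by
  have := isFiniteMeasure_T0 (l := l) hw.le hμ₀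
  refine ⟨inferInstance, ?_, fun φ hφ hφc => ?_⟩
  · simp [T0_compl_eq_zero hw hμ₀, Tb_compl_eq_zero hw hμin, Tb_compl_eq_zero hw hμb]
  have hint : ∀ (ρ : Measure ℝ) [IsFiniteMeasure ρ], Integrable (fun s => φ (l, s)) ρ :=
    fun ρ _ => hφ.continuous.integrable_comp_of_hasCompactSupport hφc (by fun_prop)
  have hD : ∀ (ν : Measure (ℝ × ℝ)) [IsFiniteMeasure ν], Integrable (transportDeriv w φ) ν :=
    fun ν _ => hφ.continuous_transportDeriv.integrable_comp_of_hasCompactSupport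
      hφc.transportDeriv measurable_id
  set A := μ₀.map (fun y => (l - y) / w) + (μin + μb).map (fun s => s + l / w) with hA
  have : IsFiniteMeasure (A - μa) := isFiniteMeasure_of_le A Measure.sub_le
  have houtflow : ∫ s, φ (l, s) ∂(A - μa) + ∫ s, φ (l, s) ∂μa
      = ∫ s, φ (l, s) ∂μ₀.map (fun y => (l - y) / w)
        + ∫ s, φ (l, s) ∂(μin + μb).map (fun s => s + l / w) := by
    rw [← integral_add_measure (hint _) (hint _), Measure.sub_add_cancel_of_le hμa, hA,
      integral_add_measure (hint _) (hint _)]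
  rw [add_assoc (T0 w l μ₀), ← Tb_add, integral_add_measure (hD _) (hD _),
    integral_transportDeriv_T0 hw hμ₀ hφ hφc,
    integral_transportDeriv_Tb hw hl hφ hφc]
  linarith

end WeakSolution

theorem unique_weak_solution_one_edge_general (w l : ℝ) (hw : 0 < w) (hl : 0 < l)
    (μ₀ μin μb μa : Measure ℝ)
    [IsFiniteMeasure μ₀] [IsFiniteMeasure μin] [IsFiniteMeasure μb]
    [IsFiniteMeasure μa]
    (hμ₀ : μ₀ ((Set.Icc (0 : ℝ) l)ᶜ) = 0)
    (hμin : μin ((Set.Ici (0 : ℝ))ᶜ) = 0)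
    (hμb : μb ((Set.Ici (0 : ℝ))ᶜ) = 0)
    (hμa_le : μa ≤ Measure.map (fun y => (l - y) / w) μ₀
        + Measure.map (fun s => s + l / w) (μin + μb)) :
    (IsFiniteMeasure (T0 w l μ₀ + Tb w l μin + Tb w l μb) ∧
      (T0 w l μ₀ + Tb w l μin + Tb w l μb)
        ((Set.Icc (0 : ℝ) l ×ˢ Set.Ici (0 : ℝ))ᶜ) = 0 ∧
      ∀ φ : ℝ × ℝ → ℝ, ContDiff ℝ 1 φ → HasCompactSupport φ →
        ∫ p, (fderiv ℝ φ p (0, 1) + w * fderiv ℝ φ p (1, 0))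
            ∂(T0 w l μ₀ + Tb w l μin + Tb w l μb)
          + ∫ y, φ (y, 0) ∂μ₀
          + ∫ s, φ (0, s) ∂(μin + μb)
          - ∫ s, φ (l, s)
              ∂((Measure.map (fun y => (l - y) / w) μ₀
                  + Measure.map (fun s => s + l / w) (μin + μb)) - μa)
          - ∫ s, φ (l, s) ∂μa = 0) ∧
    (∀ ν' : Measure (ℝ × ℝ), IsFiniteMeasure ν' →
      ν' ((Set.Icc (0 : ℝ) l ×ˢ Set.Ici (0 : ℝ))ᶜ) = 0 →
      (∀ φ : ℝ × ℝ → ℝ, ContDiff ℝ 1 φ → HasCompactSupport φ →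
        ∫ p, (fderiv ℝ φ p (0, 1) + w * fderiv ℝ φ p (1, 0)) ∂ν'
          + ∫ y, φ (y, 0) ∂μ₀
          + ∫ s, φ (0, s) ∂(μin + μb)
          - ∫ s, φ (l, s)
              ∂((Measure.map (fun y => (l - y) / w) μ₀
                  + Measure.map (fun s => s + l / w) (μin + μb)) - μa)
          - ∫ s, φ (l, s) ∂μa = 0) →
      ν' = T0 w l μ₀ + Tb w l μin + Tb w l μb) := by
  have hν := isWeakSolution_T0_add_Tb hw hl.le hμ₀ hμin hμb hμa_le
  exact ⟨hν, fun ν' hfin hsupp hweak => IsWeakSolution.unique ⟨hfin, hsupp, hweak⟩ hν⟩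

/-- Theorem 3.2 (full statement): `ν = T₀(μ₀) + T_b(μ_in) + T_b(μ_b)` is the
unique finite Borel measure on `ℝ²`, supported in `[0,l] × [0,∞)`, satisfying
the weak formulation of the tram problem on one edge (Definition 3.4) with
initial datum `μ₀`, inflow `μ_in`, boarding measure `μ_b` and alighting
measure `μ_a`. -/
theorem unique_weak_solution_one_edge (w l : ℝ) (hw : 0 < w) (hl : 0 < l)
    (μ₀ μin μb μa : Measure ℝ)
    [IsFiniteMeasure μ₀] [IsFiniteMeasure μin] [IsFiniteMeasure μb]
    [IsFiniteMeasure μa]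
    (hμ₀ : μ₀ ((Set.Icc (0 : ℝ) l)ᶜ) = 0)
    (hμin : μin ((Set.Ici (0 : ℝ))ᶜ) = 0)
    (hμb : μb ((Set.Ici (0 : ℝ))ᶜ) = 0)
    (hμa : μa ((Set.Ici (0 : ℝ))ᶜ) = 0)
    (hμa_le : μa ≤ Measure.map (fun y => (l - y) / w) μ₀
        + Measure.map (fun s => s + l / w) (μin + μb)) :
    (IsFiniteMeasure (T0 w l μ₀ + Tb w l μin + Tb w l μb) ∧
      (T0 w l μ₀ + Tb w l μin + Tb w l μb)
        ((Set.Icc (0 : ℝ) l ×ˢ Set.Ici (0 : ℝ))ᶜ) = 0 ∧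
      ∀ φ : ℝ × ℝ → ℝ, ContDiff ℝ 1 φ → HasCompactSupport φ →
        ∫ p, (fderiv ℝ φ p (0, 1) + w * fderiv ℝ φ p (1, 0))
            ∂(T0 w l μ₀ + Tb w l μin + Tb w l μb)
          + ∫ y, φ (y, 0) ∂μ₀
          + ∫ s, φ (0, s) ∂(μin + μb)
          - ∫ s, φ (l, s)
              ∂((Measure.map (fun y => (l - y) / w) μ₀
                  + Measure.map (fun s => s + l / w) (μin + μb)) - μa)
          - ∫ s, φ (l, s) ∂μa = 0) ∧
    (∀ ν' : Measure (ℝ × ℝ), IsFiniteMeasure ν' →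
      ν' ((Set.Icc (0 : ℝ) l ×ˢ Set.Ici (0 : ℝ))ᶜ) = 0 →
      (∀ φ : ℝ × ℝ → ℝ, ContDiff ℝ 1 φ → HasCompactSupport φ →
        ∫ p, (fderiv ℝ φ p (0, 1) + w * fderiv ℝ φ p (1, 0)) ∂ν'
          + ∫ y, φ (y, 0) ∂μ₀
          + ∫ s, φ (0, s) ∂(μin + μb)
          - ∫ s, φ (l, s)
              ∂((Measure.map (fun y => (l - y) / w) μ₀
                  + Measure.map (fun s => s + l / w) (μin + μb)) - μa)
          - ∫ s, φ (l, s) ∂μa = 0) →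
      ν' = T0 w l μ₀ + Tb w l μin + Tb w l μb) :=
  unique_weak_solution_one_edge_general w l hw hl μ₀ μin μb μa hμ₀ hμin hμb hμa_le
end
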